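/- arXiv:2512.06348 — 4 statements merged into one kernel-verified Lean document; each statement's English description precedes it below -/
import Mathlib

section
/- Let α₀ > 0 and c ∈ (0,∞). Let ε and Y be independent nonnegative random variables with ℙ(ε > x) · x^{α₀} → c as x → ∞, and suppose 𝔼[Y^{α₀+η}] < ∞ for some η > 0. Then ℙ(εY > x)/ℙ(ε > x) → 𝔼[Y^{α₀}] as x → ∞; equivalently, x^{α₀} ℙ(εY > x) → c · 𝔼[Y^{α₀}] as x → ∞. -/
open MeasureTheory ProbabilityTheory Filter

/-- Breiman-type product tail result: if `ℙ(ε > x) ∼ c x^(-α₀)` and `Y ⊥ ε` is nonnegative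
with a finite `(α₀ + η)`-moment, then `ℙ(εY > x)/ℙ(ε > x) → 𝔼[Y^α₀]`, equivalently
`x^α₀ ℙ(εY > x) → c 𝔼[Y^α₀]`. -/
theorem breiman_product_tail {Ω : Type*} [MeasurableSpace Ω] (P : Measure Ω)
    [IsProbabilityMeasure P] (α₀ c η : ℝ) (hα₀ : 0 < α₀) (hc : 0 < c) (hη : 0 < η)
    (ε Y : Ω → ℝ) (hε : Measurable ε) (hY : Measurable Y)
    (hε0 : ∀ ω, 0 ≤ ε ω) (hY0 : ∀ ω, 0 ≤ Y ω)
    (hindep : IndepFun ε Y P)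
    (htail : Tendsto (fun x : ℝ => (P {ω | x < ε ω}).toReal * x ^ α₀) atTop (nhds c))
    (hmom : Integrable (fun ω => Y ω ^ (α₀ + η)) P) :
    Tendsto (fun x : ℝ => (P {ω | x < ε ω * Y ω}).toReal / (P {ω | x < ε ω}).toReal)
        atTop (nhds (∫ ω, Y ω ^ α₀ ∂P)) ∧
      Tendsto (fun x : ℝ => x ^ α₀ * (P {ω | x < ε ω * Y ω}).toReal)
        atTop (nhds (c * ∫ ω, Y ω ^ α₀ ∂P)) := by
  set μ := P.map ε with hμdef
  set ν := P.map Y with hνdef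
  have hμprob : IsProbabilityMeasure μ := Measure.isProbabilityMeasure_map hε.aemeasurable
  have hνprob : IsProbabilityMeasure ν := Measure.isProbabilityMeasure_map hY.aemeasurable
  -- joint law is the product measure
  have hjoint : P.map (fun ω => (Y ω, ε ω)) = ν.prod μ :=
    (indepFun_iff_map_prod_eq_prod_map_map hY.aemeasurable hε.aemeasurable).mp hindep.symm
  have hs : ∀ x : ℝ, MeasurableSet {p : ℝ × ℝ | x < p.2 * p.1} :=
    fun x => measurableSet_lt measurable_const (measurable_snd.mul measurable_fst)
  have hprod : ∀ x : ℝ, P {ω | x < ε ω * Y ω} = ∫⁻ y, μ {e | x < e * y} ∂ν := by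
    intro x
    have h1 : {ω | x < ε ω * Y ω} = (fun ω => (Y ω, ε ω)) ⁻¹' {p : ℝ × ℝ | x < p.2 * p.1} := rfl
    rw [h1, ← Measure.map_apply (hY.prodMk hε) (hs x), hjoint, Measure.prod_apply (hs x)]
    rfl
  have hFmeas : ∀ x : ℝ, Measurable (fun y : ℝ => (μ {e | x < e * y}).toReal) := by
    intro x
    exact (measurable_measure_prodMk_left (ν := μ) (hs x)).ennreal_toReal
  have htoReal : ∀ x : ℝ,
      (P {ω | x < ε ω * Y ω}).toReal = ∫ y, (μ {e | x < e * y}).toReal ∂ν := by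
    intro x
    rw [hprod x]
    exact (integral_toReal (measurable_measure_prodMk_left (ν := μ) (hs x)).aemeasurable
      (ae_of_all _ fun y => measure_lt_top μ _)).symm
  have hμtail : ∀ t : ℝ, μ {e | t < e} = P {ω | t < ε ω} := by
    intro t
    have hI : {e : ℝ | t < e} = Set.Ioi t := rfl
    rw [hμdef, hI, Measure.map_apply hε measurableSet_Ioi]
    rfl
  have hν0 : ∀ᵐ y ∂ν, 0 ≤ y := by
    rw [hνdef]
    exact (ae_map_iff hY.aemeasurable measurableSet_Ici).mpr (ae_of_all _ hY0)
  -- pointwise limit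
  have hpt : ∀ y : ℝ, 0 ≤ y →
      Tendsto (fun x : ℝ => x ^ α₀ * (μ {e | x < e * y}).toReal) atTop (nhds (c * y ^ α₀)) := by
    intro y hy
    rcases eq_or_lt_of_le hy with h0 | hypos
    · have heq : ∀ᶠ x : ℝ in atTop,
          (0:ℝ) = x ^ α₀ * (μ {e | x < e * y}).toReal := by
        filter_upwards [eventually_gt_atTop 0] with x hx
        have hempty : {e : ℝ | x < e * y} = ∅ := by
          ext e; simp [← h0, not_lt.mpr hx.le]
        simp [hempty]
      have : c * y ^ α₀ = 0 := by rw [← h0, Real.zero_rpow hα₀.ne', mul_zero]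
      rw [this]
      exact Tendsto.congr' heq tendsto_const_nhds
    · have hcomp : Tendsto (fun x : ℝ => (P {ω | x / y < ε ω}).toReal * (x / y) ^ α₀)
          atTop (nhds c) := htail.comp (tendsto_id.atTop_div_const hypos)
      have hyα : (0:ℝ) < y ^ α₀ := Real.rpow_pos_of_pos hypos α₀
      have heq : ∀ᶠ x : ℝ in atTop,
          y ^ α₀ * ((P {ω | x / y < ε ω}).toReal * (x / y) ^ α₀)
            = x ^ α₀ * (μ {e | x < e * y}).toReal := by
        filter_upwards [eventually_gt_atTop 0] with x hx
        have hset : {e : ℝ | x < e * y} = {e : ℝ | x / y < e} := by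
          ext e; simp [div_lt_iff₀ hypos]
        rw [hset, hμtail, Real.div_rpow hx.le hypos.le]
        field_simp
      have hlim := hcomp.const_mul (y ^ α₀)
      rw [mul_comm] at hlim
      exact Tendsto.congr' heq hlim
  -- uniform bound
  obtain ⟨T₀, hT₀⟩ := eventually_atTop.mp (htail.eventually (eventually_le_nhds (lt_add_one c)))
  set T := max T₀ 1 with hTdef
  have hT1 : (1:ℝ) ≤ T := le_max_right _ _
  have hT : ∀ t ≥ T, (P {ω | t < ε ω}).toReal * t ^ α₀ ≤ c + 1 :=
    fun t ht => hT₀ t (le_trans (le_max_left _ _) ht)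
  set C := max (c + 1) (T ^ α₀) with hCdef
  have hbound : ∀ᶠ x : ℝ in atTop, ∀ᵐ y ∂ν,
      ‖x ^ α₀ * (μ {e | x < e * y}).toReal‖ ≤ C * |y| ^ α₀ := by
    filter_upwards [eventually_ge_atTop T] with x hxT
    filter_upwards [hν0] with y hy
    have hx0 : (0:ℝ) < x := lt_of_lt_of_le (lt_of_lt_of_le zero_lt_one hT1) hxT
    rw [Real.norm_eq_abs,
      abs_of_nonneg (mul_nonneg (Real.rpow_nonneg hx0.le _) ENNReal.toReal_nonneg),
      abs_of_nonneg hy]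
    rcases eq_or_lt_of_le hy with h0 | hypos
    · have hempty : {e : ℝ | x < e * y} = ∅ := by
        ext e; simp [← h0, not_lt.mpr hx0.le]
      rw [hempty]
      simp only [measure_empty, ENNReal.toReal_zero, mul_zero]
      positivity
    · have hset : {e : ℝ | x < e * y} = {e : ℝ | x / y < e} := by
        ext e; simp [div_lt_iff₀ hypos]
      rw [hset, hμtail]
      have hyα : (0:ℝ) < y ^ α₀ := Real.rpow_pos_of_pos hypos α₀
      by_cases hcase : T ≤ x / y
      · have h1 := hT _ hcase
        have hxy0 : (0:ℝ) < x / y := div_pos hx0 hypos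
        have key : x ^ α₀ * (P {ω | x / y < ε ω}).toReal
            = y ^ α₀ * ((P {ω | x / y < ε ω}).toReal * (x / y) ^ α₀) := by
          rw [Real.div_rpow hx0.le hypos.le]
          field_simp
        calc x ^ α₀ * (P {ω | x / y < ε ω}).toReal
            = y ^ α₀ * ((P {ω | x / y < ε ω}).toReal * (x / y) ^ α₀) := key
          _ ≤ y ^ α₀ * (c + 1) := mul_le_mul_of_nonneg_left h1 hyα.le
          _ ≤ y ^ α₀ * C := mul_le_mul_of_nonneg_left (le_max_left _ _) hyα.le
          _ = C * y ^ α₀ := mul_comm _ _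
      · push_neg at hcase
        have hxTy : x < T * y := by
          rw [div_lt_iff₀ hypos] at hcase; linarith [hcase]
        have hxα : x ^ α₀ ≤ T ^ α₀ * y ^ α₀ := by
          rw [← Real.mul_rpow (le_trans zero_le_one hT1) hypos.le]
          exact Real.rpow_le_rpow hx0.le hxTy.le hα₀.le
        have hG1 : (P {ω | x / y < ε ω}).toReal ≤ 1 := by
          simpa using ENNReal.toReal_mono ENNReal.one_ne_top prob_le_one
        calc x ^ α₀ * (P {ω | x / y < ε ω}).toReal
            ≤ x ^ α₀ * 1 := mul_le_mul_of_nonneg_left hG1 (Real.rpow_nonneg hx0.le _)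
          _ = x ^ α₀ := mul_one _
          _ ≤ T ^ α₀ * y ^ α₀ := hxα
          _ ≤ C * y ^ α₀ := mul_le_mul_of_nonneg_right (le_max_right _ _) hyα.le
  -- integrability of Y ^ α₀
  have hYα : Integrable (fun ω => Y ω ^ α₀) P := by
    refine Integrable.mono' ((integrable_const (1:ℝ)).add hmom)
      ((Real.continuous_rpow_const hα₀.le).measurable.comp hY).aestronglyMeasurable
      (ae_of_all _ fun ω => ?_)
    rw [Real.norm_eq_abs, abs_of_nonneg (Real.rpow_nonneg (hY0 ω) _)]
    simp only [Pi.add_apply]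
    rcases le_or_gt (Y ω) 1 with h1 | h1
    · have : Y ω ^ α₀ ≤ 1 := Real.rpow_le_one (hY0 ω) h1 hα₀.le
      have h2 : (0:ℝ) ≤ Y ω ^ (α₀ + η) := Real.rpow_nonneg (hY0 ω) _
      linarith
    · have : Y ω ^ α₀ ≤ Y ω ^ (α₀ + η) :=
        Real.rpow_le_rpow_of_exponent_le h1.le (by linarith)
      linarith
  have hboundInt : Integrable (fun y : ℝ => C * |y| ^ α₀) ν := by
    rw [hνdef, integrable_map_measure
      (by exact (measurable_const.mul
        ((Real.continuous_rpow_const hα₀.le).measurable.comp measurable_abs)).aestronglyMeasurable)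
      hY.aemeasurable]
    exact (hYα.const_mul C).congr (ae_of_all _ fun ω => by
      simp only [Function.comp_apply, abs_of_nonneg (hY0 ω)])
  -- the limit integral
  have hint_eq : ∫ y, c * y ^ α₀ ∂ν = c * ∫ ω, Y ω ^ α₀ ∂P := by
    rw [hνdef, integral_map hY.aemeasurable
      (by exact (measurable_const.mul
        (Real.continuous_rpow_const hα₀.le).measurable).aestronglyMeasurable)]
    exact integral_const_mul c _
  -- dominated convergence
  have hmain : Tendsto (fun x : ℝ => ∫ y, x ^ α₀ * (μ {e | x < e * y}).toReal ∂ν)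
      atTop (nhds (∫ y, c * y ^ α₀ ∂ν)) := by
    refine tendsto_integral_filter_of_dominated_convergence (fun y => C * |y| ^ α₀)
      (Eventually.of_forall fun x => ((hFmeas x).const_mul _).aestronglyMeasurable)
      hbound hboundInt ?_
    filter_upwards [hν0] with y hy using hpt y hy
  have h2 : Tendsto (fun x : ℝ => x ^ α₀ * (P {ω | x < ε ω * Y ω}).toReal)
      atTop (nhds (c * ∫ ω, Y ω ^ α₀ ∂P)) := by
    rw [← hint_eq]
    refine hmain.congr fun x => ?_
    rw [htoReal x, ← integral_const_mul]
  refine ⟨?_, h2⟩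
  have hdiv := h2.div htail hc.ne'
  have heq : ∀ᶠ x : ℝ in atTop,
      x ^ α₀ * (P {ω | x < ε ω * Y ω}).toReal / ((P {ω | x < ε ω}).toReal * x ^ α₀)
        = (P {ω | x < ε ω * Y ω}).toReal / (P {ω | x < ε ω}).toReal := by
    filter_upwards [eventually_gt_atTop 0] with x hx
    rw [mul_comm ((P {ω | x < ε ω}).toReal) (x ^ α₀),
      mul_div_mul_left _ _ (ne_of_gt (Real.rpow_pos_of_pos hx α₀))]
  have := Tendsto.congr' heq hdiv
  rwa [mul_div_cancel_left₀ _ hc.ne'] at this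
end

section
/- Let α₀ > 0 and c ∈ (0,∞). Let ε₁ and ε₂ be independent nonnegative random variables, each with ℙ(εᵢ > x) · x^{α₀} → c as x → ∞, and let (Y₁, Y₂) be a nonnegative random vector independent of (ε₁, ε₂) with 𝔼[(Y₁Y₂)^{α₀+δ}] < ∞ for some δ > 0. Then ℙ(ε₁Y₁ > x, ε₂Y₂ > x) / ℙ(ε₁ > x)² → 𝔼[Y₁^{α₀} Y₂^{α₀}] as x → ∞; equivalently, x^{2α₀} ℙ(ε₁Y₁ > x, ε₂Y₂ > x) → c² · 𝔼[Y₁^{α₀} Y₂^{α₀}]. -/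
open MeasureTheory ProbabilityTheory Filter

lemma bjt_tail_scaled {Ω : Type*} [MeasurableSpace Ω] (P : Measure Ω) [IsProbabilityMeasure P]
    (α₀ c : ℝ) (hα₀ : 0 < α₀) (ε : Ω → ℝ)
    (htail : Tendsto (fun x : ℝ => (P {ω | x < ε ω}).toReal * x ^ α₀) atTop (nhds c))
    (y : ℝ) (hy : 0 ≤ y) :
    Tendsto (fun x : ℝ => (P {ω | x < ε ω * y}).toReal * x ^ α₀) atTop
      (nhds (c * y ^ α₀)) := by
  rcases eq_or_lt_of_le hy with h0 | h0
  · have : c * y ^ α₀ = 0 := by rw [← h0, Real.zero_rpow hα₀.ne', mul_zero]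
    rw [this]
    apply Tendsto.congr' _ tendsto_const_nhds
    filter_upwards [eventually_gt_atTop 0] with x hx
    have : {ω | x < ε ω * y} = (∅ : Set Ω) := by
      ext ω; simp [← h0, not_lt.2 hx.le]
    simp [this]
  · have hcomp : Tendsto (fun x : ℝ => x / y) atTop atTop :=
      Tendsto.atTop_div_const h0 tendsto_id
    have h := (htail.comp hcomp).mul_const (y ^ α₀)
    apply h.congr'
    filter_upwards [eventually_ge_atTop 0] with x hx
    have hset : {ω | x / y < ε ω} = {ω | x < ε ω * y} := by
      ext ω; simp [div_lt_iff₀ h0]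
    simp only [Function.comp]
    rw [hset, mul_assoc, ← Real.mul_rpow (div_nonneg hx hy) hy, div_mul_cancel₀ _ h0.ne']

lemma bjt_tail_ratio {Ω : Type*} [MeasurableSpace Ω] (P : Measure Ω) [IsProbabilityMeasure P]
    (α₀ c : ℝ) (hα₀ : 0 < α₀) (hc : 0 < c) (ε : Ω → ℝ)
    (htail : Tendsto (fun x : ℝ => (P {ω | x < ε ω}).toReal * x ^ α₀) atTop (nhds c))
    (A : ℝ → ℝ)
    (hA : Tendsto (fun x : ℝ => A x * x ^ α₀) atTop (nhds c))
    (y : ℝ) (hy : 0 ≤ y) :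
    Tendsto (fun x : ℝ => (P {ω | x < ε ω * y}).toReal / A x) atTop (nhds (y ^ α₀)) := by
  have h1 := bjt_tail_scaled P α₀ c hα₀ ε htail y hy
  have h2 := h1.div hA hc.ne'
  have : c * y ^ α₀ / c = y ^ α₀ := by field_simp
  rw [this] at h2
  apply h2.congr'
  filter_upwards [eventually_gt_atTop 0] with x hx
  show (P {ω | x < ε ω * y}).toReal * x ^ α₀ / (A x * x ^ α₀) = _
  rw [mul_div_mul_right _ _ (Real.rpow_pos_of_pos hx α₀).ne']

lemma bjt_tail_bounds {Ω : Type*} [MeasurableSpace Ω] (P : Measure Ω) [IsProbabilityMeasure P]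
    (α₀ c : ℝ) (hc : 0 < c) (ε : Ω → ℝ)
    (htail : Tendsto (fun x : ℝ => (P {ω | x < ε ω}).toReal * x ^ α₀) atTop (nhds c)) :
    ∃ X : ℝ, 1 ≤ X ∧ ∀ x, X ≤ x →
      c / 2 ≤ (P {ω | x < ε ω}).toReal * x ^ α₀ ∧
      (P {ω | x < ε ω}).toReal * x ^ α₀ ≤ 2 * c := by
  have h := htail.eventually (Ioo_mem_nhds (show c / 2 < c by linarith)
    (show c < 2 * c by linarith))
  rw [eventually_atTop] at h
  obtain ⟨X, hX⟩ := h
  refine ⟨max X 1, le_max_right _ _, fun x hx => ?_⟩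
  have := hX x (le_trans (le_max_left _ _) hx)
  exact ⟨this.1.le, this.2.le⟩

lemma bjt_B_bound {Ω : Type*} [MeasurableSpace Ω] (P : Measure Ω) [IsProbabilityMeasure P]
    (α₀ c : ℝ) (hα₀ : 0 < α₀) (hc : 0 < c) (ε : Ω → ℝ)
    (X : ℝ) (hX1 : 1 ≤ X)
    (hup : ∀ x, X ≤ x → (P {ω | x < ε ω}).toReal * x ^ α₀ ≤ 2 * c)
    (x : ℝ) (hx : X ≤ x) (y : ℝ) (hy : 0 ≤ y) :
    (P {ω | x < ε ω * y}).toReal * x ^ α₀ ≤ max 1 (2 * c) * X ^ α₀ * y ^ α₀ := by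
  have hx0 : (0:ℝ) < x := lt_of_lt_of_le (by linarith) hx
  have hXp : (1:ℝ) ≤ X ^ α₀ := Real.one_le_rpow hX1 hα₀.le
  rcases eq_or_lt_of_le hy with h0 | h0
  · have : {ω | x < ε ω * y} = (∅ : Set Ω) := by
      ext ω; simp [← h0, not_lt.2 hx0.le]
    rw [this, ← h0, Real.zero_rpow hα₀.ne', mul_zero]
    simp
  rcases le_or_gt X (x / y) with hcase | hcase
  · -- x/y ≥ X : use tail upper bound
    have hset : {ω | x < ε ω * y} = {ω | x / y < ε ω} := by
      ext ω; simp [div_lt_iff₀ h0]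
    have hb := hup (x / y) hcase
    have hxy : x ^ α₀ = (x / y) ^ α₀ * y ^ α₀ := by
      rw [← Real.mul_rpow (div_nonneg hx0.le hy) hy, div_mul_cancel₀ _ h0.ne']
    rw [hset, hxy, ← mul_assoc]
    calc (P {ω | x / y < ε ω}).toReal * (x / y) ^ α₀ * y ^ α₀
        ≤ (2 * c) * y ^ α₀ := by
          apply mul_le_mul_of_nonneg_right hb (Real.rpow_nonneg hy _)
      _ ≤ max 1 (2 * c) * X ^ α₀ * y ^ α₀ := by
          apply mul_le_mul_of_nonneg_right _ (Real.rpow_nonneg hy _)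
          calc (2*c : ℝ) ≤ max 1 (2*c) := le_max_right _ _
            _ = max 1 (2*c) * 1 := (mul_one _).symm
            _ ≤ max 1 (2*c) * X ^ α₀ := by
                apply mul_le_mul_of_nonneg_left hXp (le_trans zero_le_one (le_max_left _ _))
  · -- x < X * y : use probability ≤ 1
    have hb : (P {ω | x < ε ω * y}).toReal ≤ 1 := by
      simpa using ENNReal.toReal_mono ENNReal.one_ne_top prob_le_one
    have hxb : x ^ α₀ ≤ X ^ α₀ * y ^ α₀ := by
      rw [← Real.mul_rpow (le_trans zero_le_one hX1) hy]
      apply Real.rpow_le_rpow hx0.le _ hα₀.le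
      rw [div_lt_iff₀ h0] at hcase
      exact hcase.le
    calc (P {ω | x < ε ω * y}).toReal * x ^ α₀ ≤ 1 * (X ^ α₀ * y ^ α₀) := by
          apply mul_le_mul hb hxb (Real.rpow_nonneg hx0.le _) zero_le_one
      _ = 1 * X ^ α₀ * y ^ α₀ := by ring
      _ ≤ max 1 (2 * c) * X ^ α₀ * y ^ α₀ := by
          apply mul_le_mul_of_nonneg_right (mul_le_mul_of_nonneg_right (le_max_left _ _)
            (le_trans zero_le_one hXp)) (Real.rpow_nonneg hy _)

lemma bjt_dom {Ω : Type*} [MeasurableSpace Ω] (P : Measure Ω) [IsProbabilityMeasure P]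
    (α₀ c : ℝ) (hα₀ : 0 < α₀) (hc : 0 < c) (ε₁ ε₂ : Ω → ℝ)
    (htail₁ : Tendsto (fun x : ℝ => (P {ω | x < ε₁ ω}).toReal * x ^ α₀) atTop (nhds c))
    (htail₂ : Tendsto (fun x : ℝ => (P {ω | x < ε₂ ω}).toReal * x ^ α₀) atTop (nhds c)) :
    ∃ C : ℝ, 0 < C ∧ ∃ X : ℝ, 1 ≤ X ∧ ∀ x, X ≤ x → ∀ y₁ y₂, 0 ≤ y₁ → 0 ≤ y₂ →
      (P {ω | x < ε₁ ω * y₁}).toReal * (P {ω | x < ε₂ ω * y₂}).toReal /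
        ((P {ω | x < ε₁ ω}).toReal) ^ 2 ≤ C * (y₁ ^ α₀ * y₂ ^ α₀) := by
  obtain ⟨X₁, hX₁1, hX₁⟩ := bjt_tail_bounds P α₀ c hc ε₁ htail₁
  obtain ⟨X₂, hX₂1, hX₂⟩ := bjt_tail_bounds P α₀ c hc ε₂ htail₂
  set X := max X₁ X₂ with hXdef
  have hX1 : (1:ℝ) ≤ X := le_trans hX₁1 (le_max_left _ _)
  set K := max 1 (2 * c) * X ^ α₀ with hKdef
  have hK0 : 0 < K := by
    apply mul_pos (lt_of_lt_of_le zero_lt_one (le_max_left _ _))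
    exact Real.rpow_pos_of_pos (lt_of_lt_of_le zero_lt_one hX1) _
  refine ⟨(2 * K / c) ^ 2, by positivity, X, hX1, fun x hx y₁ y₂ hy₁ hy₂ => ?_⟩
  have hx0 : (0:ℝ) < x := lt_of_lt_of_le zero_lt_one (le_trans hX1 hx)
  set t := x ^ α₀ with htdef
  have ht : (0:ℝ) < t := Real.rpow_pos_of_pos hx0 _
  have hup₁ : ∀ z, X ≤ z → (P {ω | z < ε₁ ω}).toReal * z ^ α₀ ≤ 2 * c :=
    fun z hz => (hX₁ z (le_trans (le_max_left _ _) hz)).2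
  have hup₂ : ∀ z, X ≤ z → (P {ω | z < ε₂ ω}).toReal * z ^ α₀ ≤ 2 * c :=
    fun z hz => (hX₂ z (le_trans (le_max_right _ _) hz)).2
  have hB₁ : (P {ω | x < ε₁ ω * y₁}).toReal ≤ K * y₁ ^ α₀ / t := by
    rw [le_div_iff₀ ht]
    exact bjt_B_bound P α₀ c hα₀ hc ε₁ X hX1 hup₁ x hx y₁ hy₁
  have hB₂ : (P {ω | x < ε₂ ω * y₂}).toReal ≤ K * y₂ ^ α₀ / t := by
    rw [le_div_iff₀ ht]
    exact bjt_B_bound P α₀ c hα₀ hc ε₂ X hX1 hup₂ x hx y₂ hy₂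
  have hA : c / 2 / t ≤ (P {ω | x < ε₁ ω}).toReal := by
    rw [div_le_iff₀ ht]
    exact (hX₁ x (le_trans (le_max_left _ _) hx)).1
  have hA2 : (c / 2 / t) ^ 2 ≤ ((P {ω | x < ε₁ ω}).toReal) ^ 2 := by
    apply pow_le_pow_left₀ (by positivity) hA
  have hnum : (P {ω | x < ε₁ ω * y₁}).toReal * (P {ω | x < ε₂ ω * y₂}).toReal ≤
      (K * y₁ ^ α₀ / t) * (K * y₂ ^ α₀ / t) :=
    mul_le_mul hB₁ hB₂ ENNReal.toReal_nonneg (by positivity)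
  calc (P {ω | x < ε₁ ω * y₁}).toReal * (P {ω | x < ε₂ ω * y₂}).toReal /
        ((P {ω | x < ε₁ ω}).toReal) ^ 2
      ≤ ((K * y₁ ^ α₀ / t) * (K * y₂ ^ α₀ / t)) / (c / 2 / t) ^ 2 :=
        div_le_div₀ (by positivity) hnum (by positivity) hA2
    _ = (2 * K / c) ^ 2 * (y₁ ^ α₀ * y₂ ^ α₀) := by
        field_simp

lemma bjt_meas_q {Ω : Type*} [MeasurableSpace Ω] (P : Measure Ω) [IsProbabilityMeasure P]
    (ε : Ω → ℝ) (hε : Measurable ε) (x : ℝ) :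
    Measurable fun y : ℝ => P {ω' | x < ε ω' * y} := by
  have : IsProbabilityMeasure (Measure.map ε P) := Measure.isProbabilityMeasure_map hε.aemeasurable
  have hs : MeasurableSet {p : ℝ × ℝ | x < p.2 * p.1} :=
    measurableSet_lt measurable_const (measurable_snd.mul measurable_fst)
  have h1 : ∀ y : ℝ, P {ω' | x < ε ω' * y}
      = (Measure.map ε P) (Prod.mk y ⁻¹' {p : ℝ × ℝ | x < p.2 * p.1}) := by
    intro y
    rw [Measure.map_apply hε (measurable_prodMk_left hs)]
    rfl
  simp_rw [h1]
  exact measurable_measure_prodMk_left hs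

lemma bjt_joint_eq {Ω : Type*} [MeasurableSpace Ω] (P : Measure Ω) [IsProbabilityMeasure P]
    (ε₁ ε₂ Y₁ Y₂ : Ω → ℝ)
    (hε₁ : Measurable ε₁) (hε₂ : Measurable ε₂) (hY₁ : Measurable Y₁) (hY₂ : Measurable Y₂)
    (hindepε : IndepFun ε₁ ε₂ P)
    (hindep : IndepFun (fun ω => (ε₁ ω, ε₂ ω)) (fun ω => (Y₁ ω, Y₂ ω)) P) (x : ℝ) :
    P {ω | x < ε₁ ω * Y₁ ω ∧ x < ε₂ ω * Y₂ ω}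
      = ∫⁻ ω, P {ω' | x < ε₁ ω' * Y₁ ω} * P {ω' | x < ε₂ ω' * Y₂ ω} ∂P := by
  have hεm : Measurable fun ω => (ε₁ ω, ε₂ ω) := hε₁.prodMk hε₂
  have hYm : Measurable fun ω => (Y₁ ω, Y₂ ω) := hY₁.prodMk hY₂
  have i1 : IsProbabilityMeasure (Measure.map (fun ω => (ε₁ ω, ε₂ ω)) P) :=
    Measure.isProbabilityMeasure_map hεm.aemeasurable
  have i2 : IsProbabilityMeasure (Measure.map (fun ω => (Y₁ ω, Y₂ ω)) P) :=
    Measure.isProbabilityMeasure_map hYm.aemeasurable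
  have i3 : IsProbabilityMeasure (Measure.map ε₁ P) :=
    Measure.isProbabilityMeasure_map hε₁.aemeasurable
  have i4 : IsProbabilityMeasure (Measure.map ε₂ P) :=
    Measure.isProbabilityMeasure_map hε₂.aemeasurable
  have hmap := (indepFun_iff_map_prod_eq_prod_map_map hεm.aemeasurable hYm.aemeasurable).mp hindep
  have hmapε := (indepFun_iff_map_prod_eq_prod_map_map hε₁.aemeasurable hε₂.aemeasurable).mp hindepε
  set s : Set ((ℝ × ℝ) × ℝ × ℝ) := {p | x < p.1.1 * p.2.1 ∧ x < p.1.2 * p.2.2} with hsdef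
  have hs : MeasurableSet s := by
    apply MeasurableSet.inter
    · exact measurableSet_lt measurable_const (measurable_fst.fst.mul measurable_snd.fst)
    · exact measurableSet_lt measurable_const (measurable_fst.snd.mul measurable_snd.snd)
  have step1 : P {ω | x < ε₁ ω * Y₁ ω ∧ x < ε₂ ω * Y₂ ω}
      = (Measure.map (fun ω => ((ε₁ ω, ε₂ ω), (Y₁ ω, Y₂ ω))) P) s := by
    rw [Measure.map_apply (hεm.prodMk hYm) hs]
    rfl
  have step2 : (Measure.map (fun ω => ((ε₁ ω, ε₂ ω), (Y₁ ω, Y₂ ω))) P) s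
      = ∫⁻ y, (Measure.map (fun ω => (ε₁ ω, ε₂ ω)) P) ((fun e => (e, y)) ⁻¹' s)
          ∂(Measure.map (fun ω => (Y₁ ω, Y₂ ω)) P) := by
    rw [hmap, Measure.prod_apply_symm hs]
  have step3 : ∀ y : ℝ × ℝ, (Measure.map (fun ω => (ε₁ ω, ε₂ ω)) P) ((fun e => (e, y)) ⁻¹' s)
      = P {ω' | x < ε₁ ω' * y.1} * P {ω' | x < ε₂ ω' * y.2} := by
    intro y
    have hpre : ((fun e : ℝ × ℝ => (e, y)) ⁻¹' s)
        = {e₁ : ℝ | x < e₁ * y.1} ×ˢ {e₂ : ℝ | x < e₂ * y.2} := by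
      ext e; simp [hsdef, Set.mem_prod]
    have m1 : MeasurableSet {e : ℝ | x < e * y.1} :=
      measurableSet_lt measurable_const (measurable_id.mul_const _)
    have m2 : MeasurableSet {e : ℝ | x < e * y.2} :=
      measurableSet_lt measurable_const (measurable_id.mul_const _)
    rw [hpre, hmapε, Measure.prod_prod, Measure.map_apply hε₁ m1, Measure.map_apply hε₂ m2]
    rfl
  have hq₁ := bjt_meas_q P ε₁ hε₁ x
  have hq₂ := bjt_meas_q P ε₂ hε₂ x
  have hfm : Measurable fun y : ℝ × ℝ => P {ω' | x < ε₁ ω' * y.1} * P {ω' | x < ε₂ ω' * y.2} :=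
    (hq₁.comp measurable_fst).mul (hq₂.comp measurable_snd)
  rw [step1, step2]
  simp_rw [step3]
  rw [lintegral_map hfm hYm]

lemma bjt_joint_real {Ω : Type*} [MeasurableSpace Ω] (P : Measure Ω) [IsProbabilityMeasure P]
    (ε₁ ε₂ Y₁ Y₂ : Ω → ℝ)
    (hε₁ : Measurable ε₁) (hε₂ : Measurable ε₂) (hY₁ : Measurable Y₁) (hY₂ : Measurable Y₂)
    (hindepε : IndepFun ε₁ ε₂ P)
    (hindep : IndepFun (fun ω => (ε₁ ω, ε₂ ω)) (fun ω => (Y₁ ω, Y₂ ω)) P) (x : ℝ) :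
    (P {ω | x < ε₁ ω * Y₁ ω ∧ x < ε₂ ω * Y₂ ω}).toReal
      = ∫ ω, (P {ω' | x < ε₁ ω' * Y₁ ω}).toReal * (P {ω' | x < ε₂ ω' * Y₂ ω}).toReal ∂P := by
  rw [bjt_joint_eq P ε₁ ε₂ Y₁ Y₂ hε₁ hε₂ hY₁ hY₂ hindepε hindep x]
  have hmeas : AEMeasurable
      (fun ω => P {ω' | x < ε₁ ω' * Y₁ ω} * P {ω' | x < ε₂ ω' * Y₂ ω}) P :=
    (((bjt_meas_q P ε₁ hε₁ x).comp hY₁).mul ((bjt_meas_q P ε₂ hε₂ x).comp hY₂)).aemeasurable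
  have hfin : ∀ᵐ ω ∂P, P {ω' | x < ε₁ ω' * Y₁ ω} * P {ω' | x < ε₂ ω' * Y₂ ω} < ⊤ :=
    Filter.Eventually.of_forall fun ω =>
      ENNReal.mul_lt_top (measure_lt_top P _) (measure_lt_top P _)
  rw [← integral_toReal hmeas hfin]
  simp_rw [ENNReal.toReal_mul]

/-- Bivariate product-tail result: for independent regularly varying noises `ε₁, ε₂`
with common tail constant `c` and a nonnegative vector `(Y₁, Y₂)` independent of
`(ε₁, ε₂)` with finite joint moment, `ℙ(ε₁Y₁ > x, ε₂Y₂ > x)/ℙ(ε₁ > x)² → 𝔼[Y₁^α₀ Y₂^α₀]`,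
equivalently `x^(2α₀) ℙ(ε₁Y₁ > x, ε₂Y₂ > x) → c² 𝔼[Y₁^α₀ Y₂^α₀]`. -/
theorem breiman_joint_tail {Ω : Type*} [MeasurableSpace Ω] (P : Measure Ω)
    [IsProbabilityMeasure P] (α₀ c δ : ℝ) (hα₀ : 0 < α₀) (hc : 0 < c) (hδ : 0 < δ)
    (ε₁ ε₂ Y₁ Y₂ : Ω → ℝ)
    (hε₁ : Measurable ε₁) (hε₂ : Measurable ε₂) (hY₁ : Measurable Y₁) (hY₂ : Measurable Y₂)
    (hε₁0 : ∀ ω, 0 ≤ ε₁ ω) (hε₂0 : ∀ ω, 0 ≤ ε₂ ω)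
    (hY₁0 : ∀ ω, 0 ≤ Y₁ ω) (hY₂0 : ∀ ω, 0 ≤ Y₂ ω)
    (hindepε : IndepFun ε₁ ε₂ P)
    (hindep : IndepFun (fun ω => (ε₁ ω, ε₂ ω)) (fun ω => (Y₁ ω, Y₂ ω)) P)
    (htail₁ : Tendsto (fun x : ℝ => (P {ω | x < ε₁ ω}).toReal * x ^ α₀) atTop (nhds c))
    (htail₂ : Tendsto (fun x : ℝ => (P {ω | x < ε₂ ω}).toReal * x ^ α₀) atTop (nhds c))
    (hmom : Integrable (fun ω => (Y₁ ω * Y₂ ω) ^ (α₀ + δ)) P) :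
    Tendsto (fun x : ℝ =>
        (P {ω | x < ε₁ ω * Y₁ ω ∧ x < ε₂ ω * Y₂ ω}).toReal / (P {ω | x < ε₁ ω}).toReal ^ 2)
        atTop (nhds (∫ ω, Y₁ ω ^ α₀ * Y₂ ω ^ α₀ ∂P)) ∧
      Tendsto (fun x : ℝ =>
        x ^ (2 * α₀) * (P {ω | x < ε₁ ω * Y₁ ω ∧ x < ε₂ ω * Y₂ ω}).toReal)
        atTop (nhds (c ^ 2 * ∫ ω, Y₁ ω ^ α₀ * Y₂ ω ^ α₀ ∂P)) := by
  set A : ℝ → ℝ := fun x => (P {ω | x < ε₁ ω}).toReal with hAdef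
  set F : ℝ → Ω → ℝ := fun x ω =>
    (P {ω' | x < ε₁ ω' * Y₁ ω}).toReal * (P {ω' | x < ε₂ ω' * Y₂ ω}).toReal / A x ^ 2
    with hFdef
  -- integral representation
  have hrep : ∀ x : ℝ,
      (P {ω | x < ε₁ ω * Y₁ ω ∧ x < ε₂ ω * Y₂ ω}).toReal / A x ^ 2 = ∫ ω, F x ω ∂P := by
    intro x
    rw [bjt_joint_real P ε₁ ε₂ Y₁ Y₂ hε₁ hε₂ hY₁ hY₂ hindepε hindep x, ← integral_div]
  -- integrability of the dominating function
  have hmono : ∀ t : ℝ, 0 ≤ t → t ^ α₀ ≤ t ^ (α₀ + δ) + 1 := by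
    intro t ht
    rcases le_or_gt t 1 with h1 | h1
    · have : t ^ α₀ ≤ 1 := Real.rpow_le_one ht h1 hα₀.le
      have h2 : 0 ≤ t ^ (α₀ + δ) := Real.rpow_nonneg ht _
      linarith
    · have : t ^ α₀ ≤ t ^ (α₀ + δ) :=
        Real.rpow_le_rpow_of_exponent_le h1.le (by linarith)
      linarith
  have hintα : Integrable (fun ω => (Y₁ ω * Y₂ ω) ^ α₀) P := by
    apply Integrable.mono' (hmom.add (integrable_const 1))
    · exact ((Real.continuous_rpow_const hα₀.le).measurable.comp
        (hY₁.mul hY₂)).aestronglyMeasurable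
    · filter_upwards with ω
      rw [Real.norm_of_nonneg (Real.rpow_nonneg (mul_nonneg (hY₁0 ω) (hY₂0 ω)) _)]
      exact hmono _ (mul_nonneg (hY₁0 ω) (hY₂0 ω))
  -- first limit via dominated convergence
  obtain ⟨C, hC0, X, hX1, hdom⟩ := bjt_dom P α₀ c hα₀ hc ε₁ ε₂ htail₁ htail₂
  have h1 : Tendsto (fun x : ℝ => ∫ ω, F x ω ∂P) atTop
      (nhds (∫ ω, Y₁ ω ^ α₀ * Y₂ ω ^ α₀ ∂P)) := by
    apply tendsto_integral_filter_of_dominated_convergence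
      (fun ω => C * (Y₁ ω * Y₂ ω) ^ α₀)
    · filter_upwards with x
      exact (((((bjt_meas_q P ε₁ hε₁ x).comp hY₁).ennreal_toReal).mul
        (((bjt_meas_q P ε₂ hε₂ x).comp hY₂).ennreal_toReal)).div_const _).aestronglyMeasurable
    · filter_upwards [eventually_ge_atTop X] with x hx
      filter_upwards with ω
      rw [Real.norm_of_nonneg (by positivity)]
      have := hdom x hx (Y₁ ω) (Y₂ ω) (hY₁0 ω) (hY₂0 ω)
      rwa [← Real.mul_rpow (hY₁0 ω) (hY₂0 ω)] at this
    · exact hintα.const_mul C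
    · filter_upwards with ω
      have e1 := bjt_tail_ratio P α₀ c hα₀ hc ε₁ htail₁ A htail₁ (Y₁ ω) (hY₁0 ω)
      have e2 := bjt_tail_ratio P α₀ c hα₀ hc ε₂ htail₂ A htail₁ (Y₂ ω) (hY₂0 ω)
      have := e1.mul e2
      apply this.congr
      intro x
      rw [hFdef]
      simp only [div_mul_div_comm, pow_two]
  have hT1 : Tendsto (fun x : ℝ =>
      (P {ω | x < ε₁ ω * Y₁ ω ∧ x < ε₂ ω * Y₂ ω}).toReal / A x ^ 2)
      atTop (nhds (∫ ω, Y₁ ω ^ α₀ * Y₂ ω ^ α₀ ∂P)) := by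
    apply h1.congr fun x => (hrep x).symm
  refine ⟨hT1, ?_⟩
  -- second limit
  have hA2 : Tendsto (fun x : ℝ => (A x * x ^ α₀) ^ 2) atTop (nhds (c ^ 2)) := htail₁.pow 2
  have h2 := hA2.mul hT1
  apply h2.congr'
  have hApos : ∀ᶠ x : ℝ in atTop, 0 < A x := by
    have := htail₁.eventually (eventually_gt_nhds (show c / 2 < c by linarith))
    filter_upwards [this, eventually_gt_atTop 0] with x h hx
    have ht : (0:ℝ) < x ^ α₀ := Real.rpow_pos_of_pos hx _
    nlinarith [ENNReal.toReal_nonneg (a := P {ω | x < ε₁ ω})]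
  filter_upwards [hApos, eventually_gt_atTop 0] with x hA hx
  have hpow : x ^ (2 * α₀) = (x ^ α₀) ^ 2 := by
    rw [mul_comm, Real.rpow_mul hx.le, Real.rpow_two]
  rw [hpow, mul_pow]
  field_simp
end

section
/- Let α₀ > 0 and c_F, c_L ∈ (0,∞). Let Y be a nonnegative random variable with 𝔼[Y^{α₀+η}] < ∞ for some η > 0 and ℙ(Y > 0) > 0. Let ε_F and ε_L be nonnegative random variables, each independent of Y, with ℙ(ε_F > x) · x^{α₀} → c_F and ℙ(ε_L > x) · x^{α₀} → c_L as x → ∞. Set X_F = ε_F Y and X_L = ε_L Y. Then ℙ(X_F > x)/ℙ(X_L > x) → c_F/c_L as x → ∞, i.e. the two survival functions are tail-equivalent with ratio c_F/c_L. -/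
open MeasureTheory ProbabilityTheory Filter

/-- Breiman-type lemma: if `P(ε > x) x^α → c` and `Y ≥ 0` is independent of `ε` with
integrable `Y^α`, then `P(εY > x) x^α → c E[Y^α]`. -/
lemma breiman_aux {Ω : Type*} [MeasurableSpace Ω] (P : Measure Ω) [IsProbabilityMeasure P]
    (α c : ℝ) (hα : 0 < α) (ε Y : Ω → ℝ)
    (hε : Measurable ε) (hY : Measurable Y) (hY0 : ∀ ω, 0 ≤ Y ω)
    (hmomα : Integrable (fun ω => Y ω ^ α) P)
    (hindep : IndepFun ε Y P)
    (htail : Tendsto (fun x : ℝ => (P {ω | x < ε ω}).toReal * x ^ α) atTop (nhds c)) :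
    Tendsto (fun x : ℝ => (P {ω | x < ε ω * Y ω}).toReal * x ^ α) atTop
      (nhds (c * ∫ ω, Y ω ^ α ∂P)) := by
  set ν := P.map Y with hν
  set μ := P.map ε with hμ
  have hprobν : IsProbabilityMeasure ν := Measure.isProbabilityMeasure_map hY.aemeasurable
  have hprobμ : IsProbabilityMeasure μ := Measure.isProbabilityMeasure_map hε.aemeasurable
  have hs : ∀ x : ℝ, MeasurableSet {p : ℝ × ℝ | x < p.2 * p.1} := fun x =>
    measurableSet_lt measurable_const (measurable_snd.mul measurable_fst)
  have hmapYε : P.map (fun ω => (Y ω, ε ω)) = ν.prod μ := by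
    rw [← indepFun_iff_map_prod_eq_prod_map_map hY.aemeasurable hε.aemeasurable]
    exact hindep.symm
  have hrep : ∀ x : ℝ, P {ω | x < ε ω * Y ω} = ∫⁻ y, μ {t | x < t * y} ∂ν := by
    intro x
    have h1 : {ω | x < ε ω * Y ω} = (fun ω => (Y ω, ε ω)) ⁻¹' {p : ℝ × ℝ | x < p.2 * p.1} := rfl
    rw [h1, ← Measure.map_apply (hY.prodMk hε) (hs x), hmapYε, Measure.prod_apply (hs x)]
    rfl
  have hmble : ∀ x : ℝ, Measurable fun y => μ {t | x < t * y} := by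
    intro x
    have := measurable_measure_prodMk_left (ν := μ) (hs x)
    simpa [Set.preimage_setOf_eq] using this
  have hrepR : ∀ x : ℝ, (P {ω | x < ε ω * Y ω}).toReal
      = ∫ y, (μ {t | x < t * y}).toReal ∂ν := by
    intro x
    rw [hrep x]
    exact (integral_toReal (hmble x).aemeasurable
      (Eventually.of_forall fun y => measure_lt_top _ _)).symm
  have hμtail : ∀ t : ℝ, μ {s | t < s} = P {ω | t < ε ω} := by
    intro t
    have hms : MeasurableSet {s : ℝ | t < s} := measurableSet_Ioi
    rw [hμ, Measure.map_apply hε hms]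
    rfl
  -- uniform bound M on t ↦ P(ε > t) t^α for t > 0
  obtain ⟨x₀, hx₀⟩ : ∃ x₀ : ℝ, ∀ x ≥ x₀, (P {ω | x < ε ω}).toReal * x ^ α ≤ c + 1 :=
    eventually_atTop.mp (htail.eventually (eventually_le_nhds (lt_add_one c)))
  set x₁ : ℝ := max x₀ 1 with hx₁def
  have hx₁pos : (0:ℝ) < x₁ := lt_of_lt_of_le one_pos (le_max_right _ _)
  set M : ℝ := max (c + 1) (x₁ ^ α) with hMdef
  have hM : ∀ t : ℝ, 0 < t → (P {ω | t < ε ω}).toReal * t ^ α ≤ M := by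
    intro t ht
    by_cases h : x₁ ≤ t
    · exact le_trans (hx₀ t (le_trans (le_max_left _ _) h)) (le_max_left _ _)
    · push_neg at h
      have h1 : (P {ω | t < ε ω}).toReal ≤ 1 := by
        have := prob_le_one (μ := P) (s := {ω | t < ε ω})
        simpa using ENNReal.toReal_mono ENNReal.one_ne_top this
      have h2 : t ^ α ≤ x₁ ^ α := Real.rpow_le_rpow ht.le h.le hα.le
      calc (P {ω | t < ε ω}).toReal * t ^ α ≤ 1 * x₁ ^ α :=
            mul_le_mul h1 h2 (Real.rpow_nonneg ht.le α) one_pos.le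
        _ = x₁ ^ α := one_mul _
        _ ≤ M := le_max_right _ _
  have hae : ∀ᵐ y ∂ν, 0 ≤ y := by
    have hms : MeasurableSet {y : ℝ | 0 ≤ y} := measurableSet_Ici
    rw [hν, ae_map_iff hY.aemeasurable hms]
    exact Eventually.of_forall hY0
  -- set identity for y > 0
  have hsets : ∀ (x y : ℝ), 0 < y → {t : ℝ | x < t * y} = {t : ℝ | x / y < t} := by
    intro x y hy
    ext t
    simp only [Set.mem_setOf_eq]
    exact ⟨fun h => (div_lt_iff₀ hy).mpr h, fun h => (div_lt_iff₀ hy).mp h⟩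
  have hxy : ∀ (x y : ℝ), 0 ≤ x → 0 < y → x ^ α = (x / y) ^ α * y ^ α := by
    intro x y hx hy
    rw [← Real.mul_rpow (div_nonneg hx hy.le) hy.le, div_mul_cancel₀ _ hy.ne']
  -- dominated convergence
  have key := tendsto_integral_filter_of_dominated_convergence
      (μ := ν) (l := atTop) (F := fun x y => (μ {t | x < t * y}).toReal * x ^ α)
      (f := fun y => c * y ^ α) (bound := fun y => M * y ^ α)
      (Eventually.of_forall fun x =>
        ((hmble x).ennreal_toReal.mul_const _).aestronglyMeasurable)
      ?_ ?_ ?_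
  · have hI : ∫ y, c * y ^ α ∂ν = c * ∫ ω, Y ω ^ α ∂P := by
      rw [integral_const_mul, hν, integral_map hY.aemeasurable
        ((by fun_prop : Measurable fun y : ℝ => y ^ α)).aestronglyMeasurable]
    have heq : ∀ x : ℝ, (P {ω | x < ε ω * Y ω}).toReal * x ^ α
        = ∫ y, (μ {t | x < t * y}).toReal * x ^ α ∂ν := by
      intro x
      rw [hrepR x, ← integral_mul_const]
    rw [hI] at key
    exact key.congr fun x => (heq x).symm
  · -- bound
    filter_upwards [eventually_ge_atTop (1:ℝ)] with x hx
    filter_upwards [hae] with y hy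
    have hxpos : (0:ℝ) < x := lt_of_lt_of_le one_pos hx
    rcases eq_or_lt_of_le hy with h0 | hy'
    · subst h0
      have hzero : (μ {t : ℝ | x < t * 0}).toReal = 0 := by
        have hempty : {t : ℝ | x < t * 0} = ∅ := by
          ext t
          simp only [Set.mem_setOf_eq, mul_zero, Set.mem_empty_iff_false, iff_false]
          linarith
        rw [hempty]
        simp
      rw [Real.norm_eq_abs, hzero, zero_mul, abs_zero, Real.zero_rpow hα.ne', mul_zero]
    · rw [Real.norm_eq_abs, abs_of_nonneg
        (mul_nonneg ENNReal.toReal_nonneg (Real.rpow_nonneg hxpos.le α))]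
      rw [hsets x y hy', hμtail (x / y), hxy x y hxpos.le hy', ← mul_assoc]
      exact mul_le_mul_of_nonneg_right (hM _ (div_pos hxpos hy')) (Real.rpow_nonneg hy'.le α)
  · -- integrable bound
    have h1 : Integrable (fun y : ℝ => y ^ α) ν := by
      rw [hν, integrable_map_measure
        ((by fun_prop : Measurable fun y : ℝ => y ^ α)).aestronglyMeasurable hY.aemeasurable]
      exact hmomα
    exact h1.const_mul M
  · -- pointwise limit
    filter_upwards [hae] with y hy
    rcases eq_or_lt_of_le hy with h0 | hy'
    · subst h0
      have hev : (fun _ : ℝ => (0:ℝ)) =ᶠ[atTop]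
          fun x => (μ {t | x < t * 0}).toReal * x ^ α := by
        filter_upwards [eventually_ge_atTop (1:ℝ)] with x hx
        have hempty : {t : ℝ | x < t * 0} = ∅ := by
          ext t
          simp only [Set.mem_setOf_eq, mul_zero, Set.mem_empty_iff_false, iff_false]
          linarith
        rw [hempty]
        simp
      rw [Real.zero_rpow hα.ne', mul_zero]
      exact Tendsto.congr' hev tendsto_const_nhds
    · have hcomp : Tendsto (fun x : ℝ => x / y) atTop atTop :=
        Tendsto.atTop_div_const hy' tendsto_id
      have h1 : Tendsto (fun x : ℝ => (P {ω | x / y < ε ω}).toReal * (x / y) ^ α * y ^ α)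
          atTop (nhds (c * y ^ α)) := (htail.comp hcomp).mul_const (y ^ α)
      refine h1.congr' ?_
      filter_upwards [eventually_ge_atTop (1:ℝ)] with x hx
      have hxpos : (0:ℝ) < x := lt_of_lt_of_le one_pos hx
      rw [hsets x y hy', hμtail (x / y), hxy x y hxpos.le hy', ← mul_assoc]

/-- Marginal tail equivalence under noise replacement. -/
theorem tail_equivalence_marginal {Ω : Type*} [MeasurableSpace Ω] (P : Measure Ω)
    [IsProbabilityMeasure P] (α₀ cF cL η : ℝ) (hα₀ : 0 < α₀) (hcF : 0 < cF) (hcL : 0 < cL)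
    (hη : 0 < η) (εF εL Y : Ω → ℝ)
    (hεF : Measurable εF) (hεL : Measurable εL) (hY : Measurable Y)
    (hεF0 : ∀ ω, 0 ≤ εF ω) (hεL0 : ∀ ω, 0 ≤ εL ω) (hY0 : ∀ ω, 0 ≤ Y ω)
    (hmom : Integrable (fun ω => Y ω ^ (α₀ + η)) P)
    (hYpos : 0 < P {ω | 0 < Y ω})
    (hindepF : IndepFun εF Y P) (hindepL : IndepFun εL Y P)
    (htailF : Tendsto (fun x : ℝ => (P {ω | x < εF ω}).toReal * x ^ α₀) atTop (nhds cF))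
    (htailL : Tendsto (fun x : ℝ => (P {ω | x < εL ω}).toReal * x ^ α₀) atTop (nhds cL)) :
    Tendsto (fun x : ℝ => (P {ω | x < εF ω * Y ω}).toReal / (P {ω | x < εL ω * Y ω}).toReal)
      atTop (nhds (cF / cL)) := by
  have hmeasYα : Measurable fun ω => Y ω ^ α₀ :=
    (by fun_prop : Measurable fun y : ℝ => y ^ α₀).comp hY
  have hmomα : Integrable (fun ω => Y ω ^ α₀) P := by
    refine Integrable.mono ((integrable_const (1:ℝ)).add hmom)
      hmeasYα.aestronglyMeasurable (Eventually.of_forall fun ω => ?_)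
    have hnn : (0:ℝ) ≤ Y ω ^ (α₀ + η) := Real.rpow_nonneg (hY0 ω) _
    simp only [Pi.add_apply]
    rw [Real.norm_eq_abs, abs_of_nonneg (Real.rpow_nonneg (hY0 ω) _),
      Real.norm_eq_abs, abs_of_nonneg (by linarith : (0:ℝ) ≤ 1 + Y ω ^ (α₀ + η))]
    rcases le_total (Y ω) 1 with h1 | h1
    · have := Real.rpow_le_one (hY0 ω) h1 hα₀.le
      linarith
    · have h2 : Y ω ^ α₀ ≤ Y ω ^ (α₀ + η) :=
        Real.rpow_le_rpow_of_exponent_le h1 (by linarith)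
      linarith
  have hI : 0 < ∫ ω, Y ω ^ α₀ ∂P := by
    refine (integral_pos_iff_support_of_nonneg
      (fun ω => Real.rpow_nonneg (hY0 ω) _) hmomα).mpr ?_
    refine lt_of_lt_of_le hYpos (measure_mono fun ω hω => ?_)
    simp only [Function.mem_support]
    exact (Real.rpow_pos_of_pos hω _).ne'
  have hA := breiman_aux P α₀ cF hα₀ εF Y hεF hY hY0 hmomα hindepF htailF
  have hB := breiman_aux P α₀ cL hα₀ εL Y hεL hY hY0 hmomα hindepL htailL
  have hden : cL * ∫ ω, Y ω ^ α₀ ∂P ≠ 0 := (mul_pos hcL hI).ne'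
  have hdiv := hA.div hB hden
  have hlim : cF * (∫ ω, Y ω ^ α₀ ∂P) / (cL * ∫ ω, Y ω ^ α₀ ∂P) = cF / cL := by
    rw [mul_div_mul_right _ _ hI.ne']
  rw [hlim] at hdiv
  refine hdiv.congr' ?_
  filter_upwards [eventually_gt_atTop (0:ℝ)] with x hx
  simp only [Pi.div_apply]
  rw [mul_div_mul_right _ _ (Real.rpow_pos_of_pos hx α₀).ne']
end

section
/- Let α₀ > 0 and c_F, c_L ∈ (0,∞). Let (Y₁, Y₂) be a nonnegative random vector with 𝔼[(Y₁Y₂)^{α₀+δ}] < ∞ for some δ > 0 and 𝔼[Y₁^{α₀} Y₂^{α₀}] > 0. Let ε_F^{(1)}, ε_F^{(2)} be i.i.d. nonnegative random variables independent of (Y₁, Y₂) with ℙ(ε_F^{(1)} > x) · x^{α₀} → c_F, and let ε_L^{(1)}, ε_L^{(2)} be i.i.d. nonnegative random variables independent of (Y₁, Y₂) with ℙ(ε_L^{(1)} > x) · x^{α₀} → c_L, as x → ∞. Set X_F(i) = ε_F^{(i)} Y_i and X_L(i) = ε_L^{(i)} Y_i for i = 1, 2. Then ℙ(X_F(1) >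 x, X_F(2) > x) / ℙ(X_L(1) > x, X_L(2) > x) → (c_F/c_L)² as x → ∞. -/
open MeasureTheory ProbabilityTheory Filter

open scoped ENNReal in
lemma key_tail {Ω : Type*} [MeasurableSpace Ω] (P : Measure Ω) [IsProbabilityMeasure P]
    (α₀ c δ : ℝ) (hα₀ : 0 < α₀) (hc : 0 < c) (hδ : 0 < δ)
    (ε₁ ε₂ Y₁ Y₂ : Ω → ℝ) (hε₁ : Measurable ε₁) (hε₂ : Measurable ε₂)
    (hY₁ : Measurable Y₁) (hY₂ : Measurable Y₂)
    (hY₁0 : ∀ ω, 0 ≤ Y₁ ω) (hY₂0 : ∀ ω, 0 ≤ Y₂ ω)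
    (hiid : IndepFun ε₁ ε₂ P) (hid : IdentDistrib ε₁ ε₂ P P)
    (hindep : IndepFun (fun ω => (ε₁ ω, ε₂ ω)) (fun ω => (Y₁ ω, Y₂ ω)) P)
    (htail : Tendsto (fun x : ℝ => (P {ω | x < ε₁ ω}).toReal * x ^ α₀) atTop (nhds c))
    (hmom : Integrable (fun ω => (Y₁ ω * Y₂ ω) ^ (α₀ + δ)) P) :
    Tendsto (fun x : ℝ =>
        (P {ω | x < ε₁ ω * Y₁ ω ∧ x < ε₂ ω * Y₂ ω}).toReal * (x ^ α₀ * x ^ α₀)) atTop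
      (nhds (c ^ 2 * ∫ ω, Y₁ ω ^ α₀ * Y₂ ω ^ α₀ ∂P)) := by
  have hYp : Measurable fun ω => (Y₁ ω, Y₂ ω) := hY₁.prodMk hY₂
  have hεp : Measurable fun ω => (ε₁ ω, ε₂ ω) := hε₁.prodMk hε₂
  set μ : Measure (ℝ × ℝ) := P.map (fun ω => (Y₁ ω, Y₂ ω)) with hμ
  haveI : IsProbabilityMeasure μ := Measure.isProbabilityMeasure_map hYp.aemeasurable
  set F : ℝ → ℝ → ℝ≥0∞ := fun x y => P {ω | x < ε₁ ω * y} with hF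
  -- measurability of F in y
  have hFmeas : ∀ x : ℝ, Measurable fun y : ℝ => F x y := by
    intro x
    have hs : MeasurableSet {p : ℝ × Ω | x < ε₁ p.2 * p.1} :=
      measurableSet_lt measurable_const ((hε₁.comp measurable_snd).mul measurable_fst)
    exact measurable_measure_prodMk_left (ν := P) hs
  -- factorization of the joint tail probability
  have hfact : ∀ x : ℝ, P {ω | x < ε₁ ω * Y₁ ω ∧ x < ε₂ ω * Y₂ ω}
      = ∫⁻ y, F x y.1 * F x y.2 ∂μ := by
    intro x
    have hmapYε : P.map (fun ω => ((Y₁ ω, Y₂ ω), (ε₁ ω, ε₂ ω)))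
        = μ.prod (P.map (fun ω => (ε₁ ω, ε₂ ω))) :=
      (indepFun_iff_map_prod_eq_prod_map_map hYp.aemeasurable hεp.aemeasurable).mp hindep.symm
    have hmapε : P.map (fun ω => (ε₁ ω, ε₂ ω)) = (P.map ε₁).prod (P.map ε₂) :=
      (indepFun_iff_map_prod_eq_prod_map_map hε₁.aemeasurable hε₂.aemeasurable).mp hiid
    have hS : MeasurableSet {p : (ℝ × ℝ) × ℝ × ℝ | x < p.2.1 * p.1.1 ∧ x < p.2.2 * p.1.2} := by
      apply MeasurableSet.inter
      · exact measurableSet_lt measurable_const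
          ((measurable_snd.fst).mul (measurable_fst.fst))
      · exact measurableSet_lt measurable_const
          ((measurable_snd.snd).mul (measurable_fst.snd))
    have h1 : P {ω | x < ε₁ ω * Y₁ ω ∧ x < ε₂ ω * Y₂ ω}
        = (P.map (fun ω => ((Y₁ ω, Y₂ ω), (ε₁ ω, ε₂ ω))))
            {p | x < p.2.1 * p.1.1 ∧ x < p.2.2 * p.1.2} := by
      rw [Measure.map_apply (hYp.prodMk hεp) hS]
      rfl
    rw [h1, hmapYε, Measure.prod_apply hS]
    refine lintegral_congr fun y => ?_
    have h2 : (Prod.mk y ⁻¹' {p : (ℝ × ℝ) × ℝ × ℝ | x < p.2.1 * p.1.1 ∧ x < p.2.2 * p.1.2})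
        = {t : ℝ | x < t * y.1} ×ˢ {t : ℝ | x < t * y.2} := rfl
    have hset : ∀ a : ℝ, MeasurableSet {t : ℝ | x < t * a} := fun a =>
      measurableSet_lt measurable_const (measurable_id.mul_const a)
    rw [h2, hmapε, Measure.prod_prod, Measure.map_apply hε₁ (hset y.1),
      Measure.map_apply hε₂ (hset y.2), ← hid.measure_mem_eq (hset y.2)]
    rfl
  -- real-valued tail function
  set f : ℝ → ℝ → ℝ := fun x y => (F x y).toReal with hf
  have hfmeas : ∀ x : ℝ, Measurable fun y : ℝ => f x y := fun x => (hFmeas x).ennreal_toReal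
  have hf0 : ∀ x y : ℝ, 0 ≤ f x y := fun x y => ENNReal.toReal_nonneg
  have hf1 : ∀ x y : ℝ, f x y ≤ 1 := by
    intro x y
    have h1 : (F x y) ≤ 1 := prob_le_one
    calc f x y ≤ (1 : ℝ≥0∞).toReal := ENNReal.toReal_mono ENNReal.one_ne_top h1
      _ = 1 := by simp
  have hARe : ∀ x : ℝ, (P {ω | x < ε₁ ω * Y₁ ω ∧ x < ε₂ ω * Y₂ ω}).toReal
      = ∫ y, f x y.1 * f x y.2 ∂μ := by
    intro x
    rw [hfact x]
    have haem : AEMeasurable (fun y : ℝ × ℝ => F x y.1 * F x y.2) μ :=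
      (((hFmeas x).comp measurable_fst).mul ((hFmeas x).comp measurable_snd)).aemeasurable
    have hfin : ∀ᵐ y ∂μ, F x y.1 * F x y.2 < ⊤ :=
      ae_of_all _ fun y => ENNReal.mul_lt_top (measure_lt_top P _) (measure_lt_top P _)
    rw [← integral_toReal haem hfin]
    exact integral_congr_ae (ae_of_all _ fun y => ENNReal.toReal_mul)
  -- a.e. nonnegativity of coordinates
  have hae : ∀ᵐ y ∂μ, 0 ≤ y.1 ∧ 0 ≤ y.2 := by
    have haes : MeasurableSet {y : ℝ × ℝ | 0 ≤ y.1 ∧ 0 ≤ y.2} :=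
      (measurableSet_le measurable_const measurable_fst).inter
        (measurableSet_le measurable_const measurable_snd)
    rw [hμ, ae_map_iff hYp.aemeasurable haes]
    exact ae_of_all _ fun ω => ⟨hY₁0 ω, hY₂0 ω⟩
  -- vanishing at y = 0
  have hF0 : ∀ x : ℝ, 0 < x → F x 0 = 0 := by
    intro x hx
    have h1 : {ω | x < ε₁ ω * (0:ℝ)} = (∅ : Set Ω) := by
      ext ω
      simp only [mul_zero, Set.mem_setOf_eq, Set.mem_empty_iff_false, iff_false]
      exact not_lt.mpr hx.le
    show P {ω | x < ε₁ ω * (0:ℝ)} = 0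
    rw [h1, measure_empty]
  -- splitting identity
  have hsplit : ∀ x : ℝ, 0 < x → ∀ y : ℝ, 0 < y →
      f x y * x ^ α₀ = (P {ω | x / y < ε₁ ω}).toReal * (x / y) ^ α₀ * y ^ α₀ := by
    intro x hx y hy
    have h1 : {ω | x < ε₁ ω * y} = {ω | x / y < ε₁ ω} := by
      ext ω
      exact (div_lt_iff₀ hy).symm
    have h2 : x ^ α₀ = (x / y) ^ α₀ * y ^ α₀ := by
      rw [← Real.mul_rpow (div_nonneg hx.le hy.le) hy.le, div_mul_cancel₀ _ hy.ne']
    simp only [hf, hF, h1]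
    rw [h2]
    ring
  -- pointwise limit
  have hptw : ∀ y : ℝ, 0 ≤ y →
      Tendsto (fun x : ℝ => f x y * x ^ α₀) atTop (nhds (c * y ^ α₀)) := by
    intro y hy
    rcases hy.lt_or_eq with hy' | hy'
    · have hdiv : Tendsto (fun x : ℝ => x / y) atTop atTop :=
        tendsto_id.atTop_div_const hy'
      have h1 := (htail.comp hdiv).mul_const (y ^ α₀)
      refine h1.congr' ?_
      filter_upwards [eventually_gt_atTop 0] with x hx
      exact (hsplit x hx y hy').symm
    · have hcy : c * y ^ α₀ = 0 := by
        rw [← hy', Real.zero_rpow hα₀.ne', mul_zero]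
      rw [hcy]
      refine tendsto_const_nhds.congr' ?_
      filter_upwards [eventually_gt_atTop 0] with x hx
      rw [← hy']
      simp [hf, hF0 x hx]
  -- uniform domination
  obtain ⟨t₀, ht₀⟩ :=
    eventually_atTop.mp (htail.eventually (eventually_le_nhds (lt_add_one c)))
  set x₀ : ℝ := max t₀ 1 with hx₀def
  have hx₀1 : (1:ℝ) ≤ x₀ := le_max_right _ _
  have hx₀pos : (0:ℝ) < x₀ := lt_of_lt_of_le one_pos hx₀1
  set C : ℝ := max (c + 1) (x₀ ^ α₀) with hCdef
  have hCpos : 0 < C := lt_of_lt_of_le (by linarith) (le_max_left _ _)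
  have hdom : ∀ x : ℝ, x₀ ≤ x → ∀ y : ℝ, 0 ≤ y → f x y * x ^ α₀ ≤ C * y ^ α₀ := by
    intro x hx y hy
    have hxpos : 0 < x := lt_of_lt_of_le hx₀pos hx
    rcases hy.lt_or_eq with hy' | hy'
    · by_cases hxy : x₀ ≤ x / y
      · rw [hsplit x hxpos y hy']
        have h1 : (P {ω | x / y < ε₁ ω}).toReal * (x / y) ^ α₀ ≤ c + 1 :=
          ht₀ _ (le_trans (le_max_left _ _) hxy)
        calc (P {ω | x / y < ε₁ ω}).toReal * (x / y) ^ α₀ * y ^ α₀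
            ≤ (c + 1) * y ^ α₀ := mul_le_mul_of_nonneg_right h1 (Real.rpow_nonneg hy _)
          _ ≤ C * y ^ α₀ :=
            mul_le_mul_of_nonneg_right (le_max_left _ _) (Real.rpow_nonneg hy _)
      · push_neg at hxy
        have h2 : x < x₀ * y := by rwa [div_lt_iff₀ hy'] at hxy
        have h3 : x ^ α₀ ≤ x₀ ^ α₀ * y ^ α₀ := by
          rw [← Real.mul_rpow hx₀pos.le hy]
          exact Real.rpow_le_rpow hxpos.le h2.le hα₀.le
        calc f x y * x ^ α₀ ≤ 1 * (x₀ ^ α₀ * y ^ α₀) :=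
            mul_le_mul (hf1 x y) h3 (Real.rpow_nonneg hxpos.le _) one_pos.le
          _ = x₀ ^ α₀ * y ^ α₀ := one_mul _
          _ ≤ C * y ^ α₀ :=
            mul_le_mul_of_nonneg_right (le_max_right _ _) (Real.rpow_nonneg hy _)
    · have h4 : f x y * x ^ α₀ = 0 := by
        rw [← hy']
        simp [hf, hF0 x hxpos]
      rw [h4]
      positivity
  -- integrability of the moment function
  have hmono : Integrable (fun ω => Y₁ ω ^ α₀ * Y₂ ω ^ α₀) P := by
    have hmeas2 : AEStronglyMeasurable (fun ω => Y₁ ω ^ α₀ * Y₂ ω ^ α₀) P := by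
      apply Measurable.aestronglyMeasurable
      fun_prop
    refine ((integrable_const (1:ℝ)).add hmom).mono' hmeas2 (ae_of_all _ fun ω => ?_)
    have ht : 0 ≤ Y₁ ω * Y₂ ω := mul_nonneg (hY₁0 ω) (hY₂0 ω)
    rw [Real.norm_eq_abs,
      abs_of_nonneg (mul_nonneg (Real.rpow_nonneg (hY₁0 ω) _) (Real.rpow_nonneg (hY₂0 ω) _)),
      ← Real.mul_rpow (hY₁0 ω) (hY₂0 ω)]
    rcases le_total (Y₁ ω * Y₂ ω) 1 with h | h
    · calc (Y₁ ω * Y₂ ω) ^ α₀ ≤ 1 ^ α₀ := Real.rpow_le_rpow ht h hα₀.le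
        _ = 1 := Real.one_rpow _
        _ ≤ 1 + (Y₁ ω * Y₂ ω) ^ (α₀ + δ) := le_add_of_nonneg_right (Real.rpow_nonneg ht _)
    · calc (Y₁ ω * Y₂ ω) ^ α₀ ≤ (Y₁ ω * Y₂ ω) ^ (α₀ + δ) :=
          Real.rpow_le_rpow_of_exponent_le h (by linarith)
        _ ≤ 1 + (Y₁ ω * Y₂ ω) ^ (α₀ + δ) := le_add_of_nonneg_left one_pos.le
  have hry : Measurable fun y : ℝ × ℝ => y.1 ^ α₀ * y.2 ^ α₀ := by fun_prop
  have hInt_map : ∫ y, y.1 ^ α₀ * y.2 ^ α₀ ∂μ = ∫ ω, Y₁ ω ^ α₀ * Y₂ ω ^ α₀ ∂P := by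
    rw [hμ, integral_map hYp.aemeasurable hry.aestronglyMeasurable]
  have hbound_int : Integrable (fun y : ℝ × ℝ => (C * y.1 ^ α₀) * (C * y.2 ^ α₀)) μ := by
    have hbm : Measurable fun y : ℝ × ℝ => (C * y.1 ^ α₀) * (C * y.2 ^ α₀) := by fun_prop
    rw [hμ, integrable_map_measure hbm.aestronglyMeasurable hYp.aemeasurable]
    refine (hmono.const_mul (C * C)).congr (ae_of_all _ fun ω => ?_)
    simp only [Function.comp_apply]
    ring
  -- dominated convergence
  have hDCT : Tendsto (fun x : ℝ => ∫ y, (f x y.1 * x ^ α₀) * (f x y.2 * x ^ α₀) ∂μ) atTop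
      (nhds (∫ y, (c * y.1 ^ α₀) * (c * y.2 ^ α₀) ∂μ)) := by
    refine tendsto_integral_filter_of_dominated_convergence
      (fun y : ℝ × ℝ => (C * y.1 ^ α₀) * (C * y.2 ^ α₀)) ?_ ?_ hbound_int ?_
    · refine Eventually.of_forall fun x => Measurable.aestronglyMeasurable ?_
      exact (((hfmeas x).comp measurable_fst).mul_const _).mul
        (((hfmeas x).comp measurable_snd).mul_const _)
    · filter_upwards [eventually_ge_atTop x₀] with x hx
      filter_upwards [hae] with y hy
      have hxpos : 0 < x := lt_of_lt_of_le hx₀pos hx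
      rw [Real.norm_eq_abs, abs_of_nonneg (mul_nonneg
        (mul_nonneg (hf0 x y.1) (Real.rpow_nonneg hxpos.le _))
        (mul_nonneg (hf0 x y.2) (Real.rpow_nonneg hxpos.le _)))]
      exact mul_le_mul (hdom x hx y.1 hy.1) (hdom x hx y.2 hy.2)
        (mul_nonneg (hf0 x y.2) (Real.rpow_nonneg hxpos.le _))
        (mul_nonneg hCpos.le (Real.rpow_nonneg hy.1 _))
    · filter_upwards [hae] with y hy
      exact (hptw y.1 hy.1).mul (hptw y.2 hy.2)
  -- conclusion
  have hfinal : ∫ y, (c * y.1 ^ α₀) * (c * y.2 ^ α₀) ∂μ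
      = c ^ 2 * ∫ ω, Y₁ ω ^ α₀ * Y₂ ω ^ α₀ ∂P := by
    rw [← hInt_map, ← integral_const_mul]
    exact integral_congr_ae (ae_of_all _ fun y => by ring)
  rw [← hfinal]
  refine hDCT.congr' (Eventually.of_forall fun x => ?_)
  show ∫ y, (f x y.1 * x ^ α₀) * (f x y.2 * x ^ α₀) ∂μ
      = (P {ω | x < ε₁ ω * Y₁ ω ∧ x < ε₂ ω * Y₂ ω}).toReal * (x ^ α₀ * x ^ α₀)
  rw [hARe x, ← integral_mul_const]
  exact integral_congr_ae (ae_of_all _ fun y => by ring)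

/-- Bivariate joint-tail equivalence under noise replacement (Theorem 1, joint part):
replacing one i.i.d. noise family (tail constant `c_F`) by another with the same tail
index `α₀` (tail constant `c_L`) changes the joint tail probability only by the factor
`(c_F/c_L)²`. -/
theorem tail_equivalence_joint {Ω : Type*} [MeasurableSpace Ω] (P : Measure Ω)
    [IsProbabilityMeasure P] (α₀ cF cL δ : ℝ) (hα₀ : 0 < α₀) (hcF : 0 < cF) (hcL : 0 < cL)
    (hδ : 0 < δ) (εF₁ εF₂ εL₁ εL₂ Y₁ Y₂ : Ω → ℝ)
    (hεF₁ : Measurable εF₁) (hεF₂ : Measurable εF₂)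
    (hεL₁ : Measurable εL₁) (hεL₂ : Measurable εL₂)
    (hY₁ : Measurable Y₁) (hY₂ : Measurable Y₂)
    (hεF₁0 : ∀ ω, 0 ≤ εF₁ ω) (hεF₂0 : ∀ ω, 0 ≤ εF₂ ω)
    (hεL₁0 : ∀ ω, 0 ≤ εL₁ ω) (hεL₂0 : ∀ ω, 0 ≤ εL₂ ω)
    (hY₁0 : ∀ ω, 0 ≤ Y₁ ω) (hY₂0 : ∀ ω, 0 ≤ Y₂ ω)
    (hiidF : IndepFun εF₁ εF₂ P) (hidF : IdentDistrib εF₁ εF₂ P P)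
    (hiidL : IndepFun εL₁ εL₂ P) (hidL : IdentDistrib εL₁ εL₂ P P)
    (hindepF : IndepFun (fun ω => (εF₁ ω, εF₂ ω)) (fun ω => (Y₁ ω, Y₂ ω)) P)
    (hindepL : IndepFun (fun ω => (εL₁ ω, εL₂ ω)) (fun ω => (Y₁ ω, Y₂ ω)) P)
    (htailF : Tendsto (fun x : ℝ => (P {ω | x < εF₁ ω}).toReal * x ^ α₀) atTop (nhds cF))
    (htailL : Tendsto (fun x : ℝ => (P {ω | x < εL₁ ω}).toReal * x ^ α₀) atTop (nhds cL))
    (hmom : Integrable (fun ω => (Y₁ ω * Y₂ ω) ^ (α₀ + δ)) P)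
    (hmom0 : 0 < ∫ ω, Y₁ ω ^ α₀ * Y₂ ω ^ α₀ ∂P) :
    Tendsto (fun x : ℝ =>
        (P {ω | x < εF₁ ω * Y₁ ω ∧ x < εF₂ ω * Y₂ ω}).toReal /
          (P {ω | x < εL₁ ω * Y₁ ω ∧ x < εL₂ ω * Y₂ ω}).toReal)
      atTop (nhds ((cF / cL) ^ 2)) := by
  have hkF := key_tail P α₀ cF δ hα₀ hcF hδ εF₁ εF₂ Y₁ Y₂ hεF₁ hεF₂ hY₁ hY₂ hY₁0 hY₂0
    hiidF hidF hindepF htailF hmom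
  have hkL := key_tail P α₀ cL δ hα₀ hcL hδ εL₁ εL₂ Y₁ Y₂ hεL₁ hεL₂ hY₁ hY₂ hY₁0 hY₂0
    hiidL hidL hindepL htailL hmom
  have hne : cL ^ 2 * ∫ ω, Y₁ ω ^ α₀ * Y₂ ω ^ α₀ ∂P ≠ 0 := by positivity
  have hdiv := hkF.div hkL hne
  have hval : (cF ^ 2 * ∫ ω, Y₁ ω ^ α₀ * Y₂ ω ^ α₀ ∂P)
      / (cL ^ 2 * ∫ ω, Y₁ ω ^ α₀ * Y₂ ω ^ α₀ ∂P) = (cF / cL) ^ 2 := by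
    rw [mul_div_mul_right _ _ hmom0.ne', div_pow]
  rw [← hval]
  refine hdiv.congr' ?_
  filter_upwards [eventually_gt_atTop 0] with x hx
  have hm : x ^ α₀ * x ^ α₀ ≠ 0 := by positivity
  exact mul_div_mul_right _ _ hm
end
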